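/- If 𝒞 is a finitely complete majority category and X is any object of 𝒞, then the slice category 𝒞/X (the comma category 𝒞 ↓ X) is a majority category, and the coslice category X/𝒞 (the comma category X ↓ 𝒞) is a majority category. -/

import Mathlib

/-!
The forgetful functors `Over X ⥤ C` and `Under X ⥤ C` carry jointly monomorphic relations to
jointly monomorphic relations, and a morphism of `C` witnessing that a triple of (co)slice
morphisms is related is itself a (co)slice morphism: over `X` because `r₁` is one, under `X`
because the underlying relation is jointly monic. So every instance of the majority property in
the (co)slice is the image of an instance in `C`.
-/

open CategoryTheory CategoryTheory.Limits

/-- The triple of morphisms `(a, b, c)` is related by the ternary relation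
`(r₁, r₂, r₃)`. -/
def TernaryRelated {C : Type*} [Category C] {R A B D S : C}
    (r₁ : R ⟶ A) (r₂ : R ⟶ B) (r₃ : R ⟶ D) (a : S ⟶ A) (b : S ⟶ B) (c : S ⟶ D) : Prop :=
  ∃ f : S ⟶ R, f ≫ r₁ = a ∧ f ≫ r₂ = b ∧ f ≫ r₃ = c

/-- A category is a majority category when every (jointly monomorphic) internal ternary
relation is strictly closed with respect to the majority matrix. -/
def IsMajorityCategory (C : Type*) [Category C] : Prop :=
  ∀ ⦃A B D R : C⦄ (r₁ : R ⟶ A) (r₂ : R ⟶ B) (r₃ : R ⟶ D),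
    (∀ ⦃S : C⦄ (f g : S ⟶ R),
      f ≫ r₁ = g ≫ r₁ → f ≫ r₂ = g ≫ r₂ → f ≫ r₃ = g ≫ r₃ → f = g) →
    ∀ ⦃S : C⦄ (a₁ a₂ : S ⟶ A) (b₁ b₂ : S ⟶ B) (c₁ c₂ : S ⟶ D),
      TernaryRelated r₁ r₂ r₃ a₁ b₁ c₂ →
      TernaryRelated r₁ r₂ r₃ a₁ b₂ c₁ →
      TernaryRelated r₁ r₂ r₃ a₂ b₁ c₁ →
      TernaryRelated r₁ r₂ r₃ a₁ b₁ c₁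

namespace CategoryTheory

variable {C D : Type*} [Category C] [Category D]

def JointlyMono {R A B E : C} (r₁ : R ⟶ A) (r₂ : R ⟶ B) (r₃ : R ⟶ E) : Prop :=
  ∀ ⦃S : C⦄ (f g : S ⟶ R), f ≫ r₁ = g ≫ r₁ → f ≫ r₂ = g ≫ r₂ → f ≫ r₃ = g ≫ r₃ → f = g

lemma _root_.TernaryRelated.map (F : D ⥤ C) {R A B E S : D} {r₁ : R ⟶ A} {r₂ : R ⟶ B} {r₃ : R ⟶ E}
    {a : S ⟶ A} {b : S ⟶ B} {c : S ⟶ E} (h : TernaryRelated r₁ r₂ r₃ a b c) :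
    TernaryRelated (F.map r₁) (F.map r₂) (F.map r₃) (F.map a) (F.map b) (F.map c) := by
  obtain ⟨f, rfl, rfl, rfl⟩ := h
  exact ⟨F.map f, (F.map_comp _ _).symm, (F.map_comp _ _).symm, (F.map_comp _ _).symm⟩

lemma _root_.IsMajorityCategory.of_functor (F : D ⥤ C) (hC : IsMajorityCategory C)
    (preserves : ∀ ⦃R A B E : D⦄ (r₁ : R ⟶ A) (r₂ : R ⟶ B) (r₃ : R ⟶ E),
      JointlyMono r₁ r₂ r₃ → JointlyMono (F.map r₁) (F.map r₂) (F.map r₃))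
    (reflects : ∀ ⦃R A B E S : D⦄ (r₁ : R ⟶ A) (r₂ : R ⟶ B) (r₃ : R ⟶ E)
      (a : S ⟶ A) (b : S ⟶ B) (c : S ⟶ E), JointlyMono r₁ r₂ r₃ →
      TernaryRelated (F.map r₁) (F.map r₂) (F.map r₃) (F.map a) (F.map b) (F.map c) →
      TernaryRelated r₁ r₂ r₃ a b c) :
    IsMajorityCategory D := by
  intro A B E R r₁ r₂ r₃ hr S a₁ a₂ b₁ b₂ c₁ c₂ h₁ h₂ h₃
  exact reflects r₁ r₂ r₃ a₁ b₁ c₁ hr <| hC _ _ _ (preserves r₁ r₂ r₃ hr) _ (F.map a₂) _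
    (F.map b₂) _ (F.map c₂) (h₁.map F) (h₂.map F) (h₃.map F)

lemma comp_prodLift_eq_iff [HasBinaryProducts C] {S R A B E : C} (r₁ : R ⟶ A) (r₂ : R ⟶ B)
    (r₃ : R ⟶ E) (f g : S ⟶ R) :
    f ≫ prod.lift (prod.lift r₁ r₂) r₃ = g ≫ prod.lift (prod.lift r₁ r₂) r₃ ↔
      f ≫ r₁ = g ≫ r₁ ∧ f ≫ r₂ = g ≫ r₂ ∧ f ≫ r₃ = g ≫ r₃ := by
  refine ⟨fun h ↦ ⟨?_, ?_, ?_⟩, fun ⟨h₁, h₂, h₃⟩ ↦ by ext <;> simp [h₁, h₂, h₃]⟩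
  · simpa only [Category.assoc, prod.lift_fst, prod.lift_fst_assoc] using h =≫ prod.fst ≫ prod.fst
  · simpa only [Category.assoc, prod.lift_fst_assoc, prod.lift_snd] using h =≫ prod.fst ≫ prod.snd
  · simpa only [Category.assoc, prod.lift_snd] using h =≫ prod.snd

lemma jointlyMono_iff_mono_prodLift [HasBinaryProducts C] {R A B E : C} (r₁ : R ⟶ A)
    (r₂ : R ⟶ B) (r₃ : R ⟶ E) :
    JointlyMono r₁ r₂ r₃ ↔ Mono (prod.lift (prod.lift r₁ r₂) r₃) := by
  refine ⟨fun h ↦ ⟨fun f g hfg ↦ ?_⟩, fun h S f g h₁ h₂ h₃ ↦ ?_⟩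
  · obtain ⟨h₁, h₂, h₃⟩ := (comp_prodLift_eq_iff r₁ r₂ r₃ f g).1 hfg
    exact h f g h₁ h₂ h₃
  · exact (cancel_mono _).1 ((comp_prodLift_eq_iff r₁ r₂ r₃ f g).2 ⟨h₁, h₂, h₃⟩)

namespace Over

variable {X : C} {R A B E S : Over X}

lemma jointlyMono_left {r₁ : R ⟶ A} {r₂ : R ⟶ B} {r₃ : R ⟶ E} (h : JointlyMono r₁ r₂ r₃) :
    JointlyMono r₁.left r₂.left r₃.left := by
  intro T f g h₁ h₂ h₃
  have hg : g ≫ R.hom = f ≫ R.hom := by rw [← Over.w r₁, reassoc_of% h₁]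
  let f' : Over.mk (f ≫ R.hom) ⟶ R := Over.homMk f
  let g' : Over.mk (f ≫ R.hom) ⟶ R := Over.homMk g hg
  exact congrArg CommaMorphism.left (h f' g' (by ext; exact h₁) (by ext; exact h₂) (by ext; exact h₃))

lemma ternaryRelated_of_left {r₁ : R ⟶ A} {r₂ : R ⟶ B} {r₃ : R ⟶ E}
    {a : S ⟶ A} {b : S ⟶ B} {c : S ⟶ E}
    (h : TernaryRelated r₁.left r₂.left r₃.left a.left b.left c.left) :
    TernaryRelated r₁ r₂ r₃ a b c := by
  obtain ⟨f, h₁, h₂, h₃⟩ := h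
  have hf : f ≫ R.hom = S.hom := by rw [← Over.w r₁, reassoc_of% h₁, Over.w a]
  exact ⟨Over.homMk f hf, by ext; exact h₁, by ext; exact h₂, by ext; exact h₃⟩

end Over

namespace Under

variable {X : C} {R A B E S : Under X}

/-- The kernel pair of `R.right ⟶ A.right ⨯ B.right ⨯ E.right` is an object under `X`, and joint
monicity in `Under X` identifies its two projections. -/
lemma jointlyMono_right [HasBinaryProducts C] [HasPullbacks C] {r₁ : R ⟶ A} {r₂ : R ⟶ B} {r₃ : R ⟶ E}
    (h : JointlyMono r₁ r₂ r₃) : JointlyMono r₁.right r₂.right r₃.right := by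
  rw [jointlyMono_iff_mono_prodLift]
  set m := prod.lift (prod.lift r₁.right r₂.right) r₃.right
  rw [mono_iff_fst_eq_snd (pullbackIsPullback m m)]
  let P : Under X := Under.mk (pullback.lift R.hom R.hom rfl : X ⟶ pullback m m)
  let p₁ : P ⟶ R := Under.homMk (pullback.fst m m) (pullback.lift_fst _ _ _)
  let p₂ : P ⟶ R := Under.homMk (pullback.snd m m) (pullback.lift_snd _ _ _)
  obtain ⟨h₁, h₂, h₃⟩ := (comp_prodLift_eq_iff _ _ _ _ _).1 (pullback.condition (f := m) (g := m))
  exact congrArg CommaMorphism.right (h p₁ p₂ (by ext; exact h₁) (by ext; exact h₂) (by ext; exact h₃))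

lemma ternaryRelated_of_right {r₁ : R ⟶ A} {r₂ : R ⟶ B} {r₃ : R ⟶ E}
    {a : S ⟶ A} {b : S ⟶ B} {c : S ⟶ E} (hr : JointlyMono r₁.right r₂.right r₃.right)
    (h : TernaryRelated r₁.right r₂.right r₃.right a.right b.right c.right) :
    TernaryRelated r₁ r₂ r₃ a b c := by
  obtain ⟨f, h₁, h₂, h₃⟩ := h
  have hf : S.hom ≫ f = R.hom := hr _ _
    (by rw [Category.assoc, h₁, Under.w a, Under.w r₁])
    (by rw [Category.assoc, h₂, Under.w b, Under.w r₂])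
    (by rw [Category.assoc, h₃, Under.w c, Under.w r₃])
  exact ⟨Under.homMk f hf, by ext; exact h₁, by ext; exact h₂, by ext; exact h₃⟩

end Under

end CategoryTheory

/-- If `C` is a finitely complete majority category and `X` an object of `C`, then
the slice category `C/X` and the coslice category `X/C` are majority categories. -/
theorem slice_coslice_majority {C : Type*} [Category C] [HasFiniteLimits C]
    (hmaj : IsMajorityCategory C) (X : C) :
    IsMajorityCategory (Over X) ∧ IsMajorityCategory (Under X) :=
  ⟨hmaj.of_functor (Over.forget X) (fun _ _ _ _ _ _ _ ↦ Over.jointlyMono_left)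
      (fun _ _ _ _ _ _ _ _ _ _ _ _ ↦ Over.ternaryRelated_of_left),
    hmaj.of_functor (Under.forget X) (fun _ _ _ _ _ _ _ ↦ Under.jointlyMono_right)
      (fun _ _ _ _ _ _ _ _ _ _ _ hr ↦ Under.ternaryRelated_of_right (Under.jointlyMono_right hr))⟩
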